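/- The departure-time sequence of the G/G/m queue is nondecreasing: D k ≤ D (k+1) for all k ≥ 1. -/
import Mathlib

noncomputable def orderStat {n : ℕ} (f : Fin n → ℝ) (k : Fin n) : ℝ :=
  f (Tuple.sort f k)

lemma card_le_filter_le {n : ℕ} (f : Fin n → ℝ) (k : Fin n) :
    (k : ℕ) + 1 ≤ (Finset.univ.filter (fun i => f i ≤ orderStat f k)).card := by
  have hmono := Tuple.monotone_sort f
  have hsub : (Finset.Iic k).image (Tuple.sort f) ⊆
      Finset.univ.filter (fun i => f i ≤ orderStat f k) := by
    intro i hi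
    simp only [Finset.mem_image, Finset.mem_Iic] at hi
    obtain ⟨j, hj, rfl⟩ := hi
    simp only [Finset.mem_filter, Finset.mem_univ, true_and]
    exact hmono hj
  have hcard := Finset.card_le_card hsub
  rwa [Finset.card_image_of_injective _ (Tuple.sort f).injective, Fin.card_Iic] at hcard

lemma card_le_filter_ge {n : ℕ} (f : Fin n → ℝ) (k : Fin n) :
    n - (k : ℕ) ≤ (Finset.univ.filter (fun i => orderStat f k ≤ f i)).card := by
  have hmono := Tuple.monotone_sort f
  have hsub : (Finset.Ici k).image (Tuple.sort f) ⊆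
      Finset.univ.filter (fun i => orderStat f k ≤ f i) := by
    intro i hi
    simp only [Finset.mem_image, Finset.mem_Ici] at hi
    obtain ⟨j, hj, rfl⟩ := hi
    simp only [Finset.mem_filter, Finset.mem_univ, true_and]
    exact hmono hj
  have hcard := Finset.card_le_card hsub
  rwa [Finset.card_image_of_injective _ (Tuple.sort f).injective, Fin.card_Ici] at hcard

lemma orderStat_castSucc_le {n : ℕ} (f : Fin (n + 1) → ℝ) (k : ℕ) (hk : k + 1 ≤ n) :
    orderStat (fun i : Fin n => f i.castSucc) ⟨k, by omega⟩ ≤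
      orderStat f ⟨k + 1, by omega⟩ := by
  by_contra h
  push_neg at h
  set a := orderStat (fun i : Fin n => f i.castSucc) ⟨k, by omega⟩ with ha
  set b := orderStat f ⟨k + 1, by omega⟩ with hb
  have h1 := card_le_filter_le f ⟨k + 1, by omega⟩
  have h2 := card_le_filter_ge (fun i : Fin n => f i.castSucc) ⟨k, by omega⟩
  set S1 := Finset.univ.filter (fun i : Fin (n+1) => f i ≤ b) with hS1
  set S2 := Finset.univ.filter (fun i : Fin n => a ≤ f i.castSucc) with hS2
  have hinj : (S2.image Fin.castSucc).card = S2.card :=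
    Finset.card_image_of_injective _ (Fin.castSucc_injective n)
  have hdisj : Disjoint S1 (S2.image Fin.castSucc) := by
    rw [Finset.disjoint_left]
    intro i hi1 hi2
    simp only [hS1, Finset.mem_filter, Finset.mem_univ, true_and] at hi1
    simp only [Finset.mem_image, hS2, Finset.mem_filter, Finset.mem_univ, true_and] at hi2
    obtain ⟨j, hj, rfl⟩ := hi2
    linarith
  have := Finset.card_union_of_disjoint hdisj ▸
    Finset.card_le_card (Finset.subset_univ (S1 ∪ S2.image Fin.castSucc))
  simp only [Finset.card_univ, Fintype.card_fin] at this
  simp only [Fin.val_mk] at h1 h2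
  omega

lemma orderStat_nat {n n' : ℕ} (h : n = n') (g : ℕ → ℝ) {j j' : ℕ} (hj : j = j')
    (hjn : j < n) :
    orderStat (fun i : Fin n => g i.1) ⟨j, hjn⟩ =
      orderStat (fun i : Fin n' => g i.1) ⟨j', by omega⟩ := by
  subst h; subst hj; rfl

/-- The departure-time sequence of the `G/G/m` queue is nondecreasing:
`D k ≤ D (k+1)` for all `k ≥ 1`. -/
theorem stmt8 (m : ℕ) (hm : 1 ≤ m) (α τ A C D : ℕ → ℝ)
    (hα : ∀ k, 1 ≤ k → 0 ≤ α k) (hτ : ∀ k, 1 ≤ k → 0 < τ k)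
    (hA0 : A 0 = 0) (hA : ∀ k, 1 ≤ k → A k = A (k - 1) + α k)
    (hD0 : D 0 = 0)
    (hC : ∀ k, 1 ≤ k → C k = (A k ⊔ D (k - m)) + τ k)
    (hD : ∀ k (hk : 1 ≤ k),
      D k = orderStat (fun i : Fin (k + m - 1) => C (i.1 + 1)) ⟨k - 1, by omega⟩) :
    ∀ k, 1 ≤ k → D k ≤ D (k + 1) := by
  intro k hk
  rw [hD k hk, hD (k + 1) (by omega)]
  rw [orderStat_nat (show k + 1 + m - 1 = (k + m - 1) + 1 by omega)
    (fun j => C (j + 1)) (show k + 1 - 1 = (k - 1) + 1 by omega)]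
  exact orderStat_castSucc_le (fun i : Fin (k + m - 1 + 1) => C (i.1 + 1)) (k - 1) (by omega)
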